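/- Let (E, F) be a resistance form on a set X whose resistance metric R is complete and such that (X,R) is doubling and uniformly perfect. Then there exists α > 1 such that for every nonempty finite subset V ⊆ X and all x, y ∈ V with x ≠ y, R_{V,B}(x,y) ≤ 2R(x,y), where B = B_R(x, αR(x,y)), (μ_{p,q}) are the resistance weights associated with the trace (E|_V, ℓ(V)), and R_{V,B}(x,y)^{-1} := min{(1/2)∑_{p,q ∈ B∩V}(f(p)−f(q))² μ_{p,q} : f ∈ ℓ(V), f(x)=1, f(y)=0}. -/

import Mathlib

open Filter Set Metric
open scoped ENNReal Topology

/-- A resistance form `(E, F)` on a set `X` (Kigami):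
`F` is a linear subspace of the real-valued functions on `X`, `E` is a nonnegative
symmetric bilinear form on `F` such that (RF1) constants belong to `F` and
`E(u,u) = 0` iff `u` is constant, (RF2) the quotient of `F` by the constants is a
Hilbert space under `E` (stated as completeness of the `E`-seminorm on `F`),
(RF3) points of `X` are separated by `F`, (RF4) for `x ≠ y` the quantity
`R(x,y) = (inf {E(u,u) : u ∈ F, u x = 1, u y = 0})⁻¹` is finite (i.e. the infimum
is positive; an admissible `u` always exists), and (RF5) the Markov property holds
for the unit truncation. -/
structure ResistanceForm (X : Type*) where
  F : Set (X → ℝ)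
  E : (X → ℝ) → (X → ℝ) → ℝ
  zero_mem : (0 : X → ℝ) ∈ F
  add_mem : ∀ {u v : X → ℝ}, u ∈ F → v ∈ F → u + v ∈ F
  smul_mem : ∀ (c : ℝ) {u : X → ℝ}, u ∈ F → c • u ∈ F
  const_mem : ∀ c : ℝ, (fun _ => c) ∈ F
  symm : ∀ u ∈ F, ∀ v ∈ F, E u v = E v u
  add_left : ∀ u ∈ F, ∀ v ∈ F, ∀ w ∈ F, E (u + v) w = E u w + E v w
  smul_left : ∀ (c : ℝ), ∀ u ∈ F, ∀ v ∈ F, E (c • u) v = c * E u v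
  nonneg : ∀ u ∈ F, 0 ≤ E u u
  null_iff_const : ∀ u ∈ F, (E u u = 0 ↔ ∃ c : ℝ, ∀ x, u x = c)
  complete : ∀ u : ℕ → (X → ℝ), (∀ n, u n ∈ F) →
    (∀ ε : ℝ, 0 < ε → ∃ N : ℕ, ∀ m ≥ N, ∀ n ≥ N, E (u m - u n) (u m - u n) < ε) →
    ∃ v ∈ F, ∀ ε : ℝ, 0 < ε → ∃ N : ℕ, ∀ n ≥ N, E (v - u n) (v - u n) < ε
  sep : ∀ x y : X, x ≠ y → ∃ u ∈ F, u x ≠ u y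
  exists_unit : ∀ x y : X, x ≠ y → ∃ u ∈ F, u x = 1 ∧ u y = 0
  inf_pos : ∀ x y : X, x ≠ y →
    0 < sInf {e : ℝ | ∃ u ∈ F, u x = 1 ∧ u y = 0 ∧ E u u = e}
  markov : ∀ u ∈ F, (fun x => max 0 (min 1 (u x))) ∈ F ∧
    E (fun x => max 0 (min 1 (u x))) (fun x => max 0 (min 1 (u x))) ≤ E u u

namespace ResistanceForm

variable {X : Type*}

open Classical in
/-- The resistance metric `R` associated with a resistance form:
`R(x,x) = 0` and `R(x,y) = (inf {E(u,u) : u ∈ F, u x = 1, u y = 0})⁻¹` for `x ≠ y`. -/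
noncomputable def rmetric (rf : ResistanceForm X) (x y : X) : ℝ :=
  if x = y then 0
  else (sInf {e : ℝ | ∃ u ∈ rf.F, u x = 1 ∧ u y = 0 ∧ rf.E u u = e})⁻¹

open Classical in
/-- The resistance `𝓡(A,B)` between two sets: the reciprocal of the minimal energy of
functions that are `≡ 1` on `A` and `≡ 0` on `B` if such functions exist, `0` if no
such function exists, and `∞` if `A` or `B` is empty. -/
noncomputable def setRes (rf : ResistanceForm X) (A B : Set X) : ℝ≥0∞ :=
  if A.Nonempty ∧ B.Nonempty then
    (if ∃ u ∈ rf.F, (∀ x ∈ A, u x = 1) ∧ (∀ x ∈ B, u x = 0) then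
      (ENNReal.ofReal
        (sInf {e : ℝ | ∃ u ∈ rf.F, (∀ x ∈ A, u x = 1) ∧ (∀ x ∈ B, u x = 0) ∧ rf.E u u = e}))⁻¹
    else 0)
  else ⊤

end ResistanceForm

/-- A distance function `ρ` on `X` is doubling: there is `N ∈ ℕ` such that every ball of
radius `2r` is covered by `N` balls of radius `r`. -/
def DoublingOf {X : Type*} (ρ : X → X → ℝ) : Prop :=
  ∃ N : ℕ, ∀ (x : X) (r : ℝ), ∃ s : Finset X, s.card ≤ N ∧
    {y : X | ρ x y < 2 * r} ⊆ ⋃ z ∈ s, {y : X | ρ z y < r}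

/-- A distance function `ρ` on `X` is uniformly perfect: there is `γ > 1` such that
`B(x, γ r) \ B(x, r) ≠ ∅` whenever `B(x,r)` is not the whole space. -/
def UniformlyPerfectOf {X : Type*} (ρ : X → X → ℝ) : Prop :=
  ∃ γ : ℝ, 1 < γ ∧ ∀ (x : X) (r : ℝ), 0 < r → {y : X | ρ x y < r} ≠ Set.univ →
    ({y : X | ρ x y < γ * r} \ {y : X | ρ x y < r}).Nonempty

namespace ResistanceForm

/-- The quadratic form of the trace of the resistance form on a subset `Y ⊆ X`:
`E|_Y(f) = inf {E(u,u) : u ∈ F, u|_Y = f|_Y}` (for finite `Y` the trace domain is all of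
`ℓ(Y)` and this infimum is attained). -/
noncomputable def traceQ {X : Type*} (rf : ResistanceForm X) (Y : Set X) (f : X → ℝ) : ℝ :=
  sInf {e : ℝ | ∃ u ∈ rf.F, (∀ x ∈ Y, u x = f x) ∧ rf.E u u = e}

open Classical in
/-- `μ` is the family of resistance weights associated with the trace `(E|_V, ℓ(V))` of
the resistance form on a finite set `V ⊆ X`: it is symmetric, the diagonal entries are
the negated row sums, and the trace energy is reproduced as
`E|_V(f,f) = (1/2) ∑_{x,y ∈ V} (f x - f y)² μ_{x,y}`. -/
def IsResistanceWeights {X : Type*} (rf : ResistanceForm X) (V : Finset X)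
    (μ : X → X → ℝ) : Prop :=
  (∀ x y : X, μ x y = μ y x) ∧
  (∀ x ∈ V, μ x x = - ∑ y ∈ V.erase x, μ x y) ∧
  (∀ f : X → ℝ, rf.traceQ (V : Set X) f =
    (1 / 2) * ∑ x ∈ V, ∑ y ∈ V, (f x - f y) * (f x - f y) * μ x y)

/-- A resistance form is local if `E(u,v) = 0` whenever
`inf {R(x,y) : u x ≠ 0, v y ≠ 0} > 0`. -/
def IsLocal {X : Type*} (rf : ResistanceForm X) : Prop :=
  ∀ u ∈ rf.F, ∀ v ∈ rf.F,
    (∃ δ : ℝ, 0 < δ ∧ ∀ x y : X, u x ≠ 0 → v y ≠ 0 → δ ≤ rf.rmetric x y) →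
    rf.E u v = 0

end ResistanceForm

/-!
Write `d = R(x, y)` and `B = B(x, α d)`. Doubling yields a cutoff `φ ∈ F` with `φ x = 1`,
`φ = 0` on `V \ B` and `E(φ) ≲ N¹² / (α d)`: take nets of the dyadic annuli
`4ᵏ α d ≤ R(x, ·) < 4ᵏ⁺¹ α d`, sum the truncated near-equilibrium potentials between `x` and
the net points (their square-root energies form a geometric series) and truncate once more.
For `f` with `f x = 1`, `f y = 0`, the function `min (f̂, φ)` competes for `R(x, y)` on `V`, so
`R(x, y)⁻¹ ≤ E|_V(min (f̂, φ)) ≤ E_{V,B}(f) + E(φ)`, edge by edge, because the off-diagonal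
weights are nonnegative (the Markov property of the trace). With `α ≳ N¹²`, `E(φ) ≤ 1 / (2d)`.
-/
noncomputable def unitTrunc (t : ℝ) : ℝ := max 0 (min 1 t)

lemma unitTrunc_nonneg (t : ℝ) : 0 ≤ unitTrunc t := le_max_left _ _

lemma unitTrunc_le_one (t : ℝ) : unitTrunc t ≤ 1 :=
  max_le zero_le_one (min_le_left _ _)

lemma unitTrunc_one : unitTrunc 1 = 1 := by norm_num [unitTrunc]

lemma unitTrunc_of_nonpos {t : ℝ} (ht : t ≤ 0) : unitTrunc t = 0 :=
  max_eq_left ((min_le_right _ _).trans ht)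

lemma sq_unitTrunc_sub_le (s t : ℝ) : (unitTrunc s - unitTrunc t) ^ 2 ≤ (s - t) ^ 2 := by
  refine sq_le_sq.2 ?_
  rw [unitTrunc, unitTrunc, max_comm 0, max_comm 0]
  exact (abs_max_sub_max_le_abs _ _ _).trans <|
    (abs_min_sub_min_le_max 1 s 1 t).trans (by simp)

lemma sq_min_sub_min_le (a b c d : ℝ) : (min a b - min c d) ^ 2 ≤ (a - c) ^ 2 + (b - d) ^ 2 := by
  have h := abs_min_sub_min_le_max a b c d
  rw [← sq_abs, ← sq_abs (a - c), ← sq_abs (b - d)]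
  rcases le_total |a - c| |b - d| with h' | h' <;>
    simp only [h', max_eq_left, max_eq_right] at h <;> nlinarith [abs_nonneg (min a b - min c d), abs_nonneg (a - c), abs_nonneg (b - d)]

noncomputable def weightedEnergy {X : Type*} (S : Finset X) (μ : X → X → ℝ) (f : X → ℝ) : ℝ :=
  (1 / 2) * ∑ p ∈ S, ∑ q ∈ S, (f p - f q) ^ 2 * μ p q

lemma weightedEnergy_sub_smul {X : Type*} (S : Finset X) (μ : X → X → ℝ) (f g : X → ℝ) (s : ℝ) :
    weightedEnergy S μ (f - s • g) = weightedEnergy S μ f + s ^ 2 * weightedEnergy S μ g -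
      s * ∑ p ∈ S, ∑ q ∈ S, (f p - f q) * (g p - g q) * μ p q := by
  have h : ∀ p q, ((f - s • g) p - (f - s • g) q) ^ 2 * μ p q = (f p - f q) ^ 2 * μ p q +
      s ^ 2 * ((g p - g q) ^ 2 * μ p q) - 2 * s * ((f p - f q) * (g p - g q) * μ p q) := by
    intro p q; simp only [Pi.sub_apply, Pi.smul_apply, smul_eq_mul]; ring
  simp only [weightedEnergy, h, Finset.sum_add_distrib, Finset.sum_sub_distrib, ← Finset.mul_sum]
  ring

section weightedEnergy

variable {X : Type*} {V B : Finset X} {μ : X → X → ℝ}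

lemma weightedEnergy_eq_sum_ite [DecidableEq X] (hB : B ⊆ V) (f : X → ℝ) :
    weightedEnergy B μ f =
      (1 / 2) * ∑ p ∈ V, ∑ q ∈ V, if p ∈ B ∧ q ∈ B then (f p - f q) ^ 2 * μ p q else 0 := by
  have hVB : V.filter (· ∈ B) = B := by rw [Finset.filter_mem_eq_inter, Finset.inter_eq_right.2 hB]
  calc weightedEnergy B μ f = weightedEnergy (V.filter (· ∈ B)) μ f := by rw [hVB]
    _ = _ := by
      rw [weightedEnergy, Finset.sum_filter]
      congr 1
      refine Finset.sum_congr rfl fun p _ => ?_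
      split_ifs with hp <;> simp [Finset.sum_filter, hp]

lemma weightedEnergy_min_unitTrunc_le (hB : B ⊆ V) (hμ : ∀ a ∈ V, ∀ b ∈ V, a ≠ b → 0 ≤ μ a b)
    {f φ : X → ℝ} (hφ0 : ∀ z, 0 ≤ φ z) (hφB : ∀ z ∈ V, z ∉ B → φ z = 0) :
    weightedEnergy V μ (fun z => min (unitTrunc (f z)) (φ z)) ≤
      weightedEnergy B μ f + weightedEnergy V μ φ := by
  classical
  set g := fun z => min (unitTrunc (f z)) (φ z)
  have hg : ∀ z, 0 ≤ g z ∧ g z ≤ φ z := fun z =>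
    ⟨le_min (unitTrunc_nonneg _) (hφ0 z), min_le_right _ _⟩
  have hgB : ∀ z ∈ V, z ∉ B → g z = 0 ∧ φ z = 0 := fun z hz hzB =>
    ⟨by simp [g, hφB z hz hzB, unitTrunc_nonneg], hφB z hz hzB⟩
  have hsq : ∀ a ∈ V, ∀ b ∈ V, (g a - g b) ^ 2 ≤
      (if a ∈ B ∧ b ∈ B then (f a - f b) ^ 2 else 0) + (φ a - φ b) ^ 2 := by
    intro a ha b hb
    split_ifs with hab
    · linarith [sq_min_sub_min_le (unitTrunc (f a)) (φ a) (unitTrunc (f b)) (φ b),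
        sq_unitTrunc_sub_le (f a) (f b)]
    · rw [zero_add]
      rcases not_and_or.1 hab with haB | hbB
      · obtain ⟨hga, hφa⟩ := hgB a ha haB
        rw [hga, hφa, zero_sub, zero_sub, neg_sq, neg_sq]
        exact pow_le_pow_left₀ (hg b).1 (hg b).2 2
      · obtain ⟨hgb, hφb⟩ := hgB b hb hbB
        rw [hgb, hφb, sub_zero, sub_zero]
        exact pow_le_pow_left₀ (hg a).1 (hg a).2 2
  rw [weightedEnergy_eq_sum_ite hB, weightedEnergy, weightedEnergy, ← mul_add,
    ← Finset.sum_add_distrib]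
  refine mul_le_mul_of_nonneg_left (Finset.sum_le_sum fun a ha => ?_) (by norm_num)
  rw [← Finset.sum_add_distrib]
  refine Finset.sum_le_sum fun b hb => ?_
  by_cases hab : a = b
  · simp [hab]
  · have := mul_le_mul_of_nonneg_right (hsq a ha b hb) (hμ a ha b hb hab)
    split_ifs at this ⊢ <;> linarith

end weightedEnergy

namespace ResistanceForm

variable {X : Type*} (rf : ResistanceForm X) {u v : X → ℝ} {a b : X}

lemma sum_mem {ι : Type*} (s : Finset ι) {g : ι → X → ℝ} (hg : ∀ i ∈ s, g i ∈ rf.F) :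
    ∑ i ∈ s, g i ∈ rf.F := by
  classical
  induction s using Finset.induction_on with
  | empty => simpa using rf.zero_mem
  | insert i s hi ih =>
    rw [Finset.sum_insert hi]
    exact rf.add_mem (hg i (s.mem_insert_self i))
      (ih fun j hj => hg j (Finset.mem_insert_of_mem hj))

lemma unitTrunc_mem (hu : u ∈ rf.F) : (fun z => unitTrunc (u z)) ∈ rf.F := (rf.markov u hu).1

lemma E_unitTrunc_le (hu : u ∈ rf.F) :
    rf.E (fun z => unitTrunc (u z)) (fun z => unitTrunc (u z)) ≤ rf.E u u :=
  (rf.markov u hu).2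

lemma E_smul_right (hu : u ∈ rf.F) (hv : v ∈ rf.F) (c : ℝ) :
    rf.E u (c • v) = c * rf.E u v := by
  rw [rf.symm u hu _ (rf.smul_mem c hv), rf.smul_left c v hv u hu, rf.symm v hv u hu]

lemma E_smul_self (hu : u ∈ rf.F) (c : ℝ) : rf.E (c • u) (c • u) = c ^ 2 * rf.E u u := by
  rw [rf.smul_left c u hu _ (rf.smul_mem c hu), rf.E_smul_right hu hu]; ring

lemma E_add_self (hu : u ∈ rf.F) (hv : v ∈ rf.F) :
    rf.E (u + v) (u + v) = rf.E u u + 2 * rf.E u v + rf.E v v := by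
  have huv := rf.add_mem hu hv
  rw [rf.add_left u hu v hv _ huv, rf.symm u hu _ huv, rf.symm v hv _ huv,
    rf.add_left u hu v hv u hu, rf.add_left u hu v hv v hv, rf.symm v hv u hu]
  ring

lemma E_sq_le (hu : u ∈ rf.F) (hv : v ∈ rf.F) : rf.E u v ^ 2 ≤ rf.E u u * rf.E v v := by
  have h := discrim_le_zero (a := rf.E v v) (b := 2 * rf.E u v) (c := rf.E u u) fun t => by
    have h0 := rf.nonneg _ (rf.add_mem hu (rf.smul_mem t hv))
    rw [rf.E_add_self hu (rf.smul_mem t hv), rf.E_smul_right hu hv, rf.E_smul_self hv] at h0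
    linarith
  rw [discrim] at h
  linarith

lemma sqrt_E_add_le (hu : u ∈ rf.F) (hv : v ∈ rf.F) :
    √(rf.E (u + v) (u + v)) ≤ √(rf.E u u) + √(rf.E v v) := by
  have hcs : rf.E u v ≤ √(rf.E u u) * √(rf.E v v) := by
    rw [← Real.sqrt_mul (rf.nonneg u hu)]
    exact Real.le_sqrt_of_sq_le (rf.E_sq_le hu hv)
  rw [Real.sqrt_le_left (by positivity), rf.E_add_self hu hv, add_sq,
    Real.sq_sqrt (rf.nonneg u hu), Real.sq_sqrt (rf.nonneg v hv)]
  linarith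

lemma sqrt_E_sum_le {ι : Type*} (s : Finset ι) {g : ι → X → ℝ} (hg : ∀ i ∈ s, g i ∈ rf.F) :
    √(rf.E (∑ i ∈ s, g i) (∑ i ∈ s, g i)) ≤ ∑ i ∈ s, √(rf.E (g i) (g i)) := by
  classical
  induction s using Finset.induction_on with
  | empty =>
    have h0 : rf.E 0 0 = 0 := (rf.null_iff_const 0 rf.zero_mem).2 ⟨0, fun _ => rfl⟩
    simp [h0]
  | insert i s hi ih =>
    have hs : ∀ j ∈ s, g j ∈ rf.F := fun j hj => hg j (Finset.mem_insert_of_mem hj)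
    rw [Finset.sum_insert hi, Finset.sum_insert hi]
    exact (rf.sqrt_E_add_le (hg i (s.mem_insert_self i)) (rf.sum_mem s hs)).trans
      (add_le_add_right (ih hs) _)

lemma E_add_const_self (hu : u ∈ rf.F) (c : ℝ) :
    rf.E (u + fun _ => c) (u + fun _ => c) = rf.E u u := by
  have hc := rf.const_mem c
  have h0 : rf.E (fun _ => c) (fun _ => c) = 0 := (rf.null_iff_const _ hc).2 ⟨c, fun _ => rfl⟩
  have h1 : rf.E u (fun _ => c) = 0 := by
    simpa [h0] using rf.E_sq_le hu hc
  rw [rf.E_add_self hu hc, h1, h0]; ring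

lemma rmetric_pos (hab : a ≠ b) : 0 < rf.rmetric a b := by
  rw [rmetric, if_neg hab]
  exact inv_pos.2 (rf.inf_pos a b hab)

lemma inv_rmetric_le_E (hab : a ≠ b) (hu : u ∈ rf.F) (ha : u a = 1) (hb : u b = 0) :
    (rf.rmetric a b)⁻¹ ≤ rf.E u u := by
  rw [rmetric, if_neg hab, inv_inv]
  refine csInf_le ⟨0, ?_⟩ ⟨u, hu, ha, hb, rfl⟩
  rintro e ⟨w, hw, -, -, rfl⟩
  exact rf.nonneg w hw

lemma sq_sub_le_rmetric_mul_E (hu : u ∈ rf.F) (a b : X) :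
    (u a - u b) ^ 2 ≤ rf.rmetric a b * rf.E u u := by
  by_cases hab : a = b
  · subst hab; simp [rmetric]
  have hR := rf.rmetric_pos hab
  by_cases huab : u a = u b
  · rw [huab, sub_self, sq, zero_mul]
    exact mul_nonneg hR.le (rf.nonneg u hu)
  set c := u a - u b
  have hc : c ≠ 0 := sub_ne_zero.2 huab
  have hu' : u + (fun _ => -u b) ∈ rf.F := rf.add_mem hu (rf.const_mem _)
  have h := rf.inv_rmetric_le_E hab (rf.smul_mem c⁻¹ hu')
    (by simpa [← sub_eq_add_neg] using inv_mul_cancel₀ hc) (by simp)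
  rw [rf.E_smul_self hu', rf.E_add_const_self hu, inv_pow, ← div_eq_inv_mul,
    le_div_iff₀ (by positivity)] at h
  calc c ^ 2 = rf.rmetric a b * ((rf.rmetric a b)⁻¹ * c ^ 2) := by field_simp
    _ ≤ rf.rmetric a b * rf.E u u := by gcongr

lemma exists_near_equilibrium_potential (hab : a ≠ b) :
    ∃ v ∈ rf.F, v a = 1 ∧ v b = 0 ∧ (∀ z, v z ≤ 1) ∧ rf.E v v ≤ 2 / rf.rmetric a b := by
  have hR := rf.rmetric_pos hab
  set S := {e : ℝ | ∃ w ∈ rf.F, w a = 1 ∧ w b = 0 ∧ rf.E w w = e}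
  have hS : sInf S = (rf.rmetric a b)⁻¹ := by rw [rmetric, if_neg hab, inv_inv]
  obtain ⟨u, hu, hua, hub⟩ := rf.exists_unit a b hab
  obtain ⟨-, ⟨w, hw, hwa, hwb, rfl⟩, hlt⟩ :=
    Real.lt_sInf_add_pos (s := S) ⟨_, u, hu, hua, hub, rfl⟩ (inv_pos.2 hR)
  refine ⟨fun z => unitTrunc (w z), rf.unitTrunc_mem hw, by simp [hwa, unitTrunc_one],
    by simp [hwb, unitTrunc_of_nonpos], fun z => unitTrunc_le_one _, ?_⟩
  rw [hS] at hlt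
  calc _ ≤ rf.E w w := rf.E_unitTrunc_le hw
    _ ≤ 2 / rf.rmetric a b := by rw [div_eq_mul_inv]; linarith

/-- `φ` is the unit truncation of `2 ∑ vᵢ + 1 - 2 #P`, which is `≤ 0` as soon as one
`vᵢ ≤ 1/2`. -/
lemma exists_cutoff_of_sum {ι : Type*} (P : Finset ι) {v : ι → X → ℝ} {x : X}
    (hv : ∀ i ∈ P, v i ∈ rf.F) (hvx : ∀ i ∈ P, v i x = 1) (hv1 : ∀ i ∈ P, ∀ z, v i z ≤ 1) :
    ∃ φ ∈ rf.F, φ x = 1 ∧ (∀ z, (∃ i ∈ P, v i z ≤ 1 / 2) → φ z = 0) ∧ (∀ z, 0 ≤ φ z) ∧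
      √(rf.E φ φ) ≤ 2 * ∑ i ∈ P, √(rf.E (v i) (v i)) := by
  set n : ℝ := (P.card : ℝ)
  set ψ := ∑ i ∈ P, v i
  have hψ : ψ ∈ rf.F := rf.sum_mem P hv
  set χ := (2 : ℝ) • ψ + fun _ => 1 - 2 * n
  have hχ : χ ∈ rf.F := rf.add_mem (rf.smul_mem 2 hψ) (rf.const_mem _)
  refine ⟨fun z => unitTrunc (χ z), rf.unitTrunc_mem hχ, ?_, ?_,
    fun z => unitTrunc_nonneg _, ?_⟩
  · have hψx : ψ x = n := by
      simp [ψ, Finset.sum_apply, Finset.sum_congr rfl hvx, n]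
    simp only [χ, Pi.add_apply, Pi.smul_apply, smul_eq_mul, hψx]
    rw [show 2 * n + (1 - 2 * n) = 1 by ring, unitTrunc_one]
  · rintro z ⟨i, hi, hiz⟩
    have : 1 - v i z ≤ ∑ j ∈ P, (1 - v j z) :=
      Finset.single_le_sum (f := fun j => 1 - v j z) (fun j hj => sub_nonneg.2 (hv1 j hj z)) hi
    have hψz : ψ z ≤ n - 1 / 2 := by
      simp only [Finset.sum_sub_distrib, Finset.sum_const, nsmul_one] at this
      simp only [ψ, Finset.sum_apply]
      linarith
    apply unitTrunc_of_nonpos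
    simp only [χ, Pi.add_apply, Pi.smul_apply, smul_eq_mul]
    linarith
  · calc √(rf.E _ _) ≤ √(rf.E χ χ) := Real.sqrt_le_sqrt (rf.E_unitTrunc_le hχ)
      _ = 2 * √(rf.E ψ ψ) := by
          rw [rf.E_add_const_self (rf.smul_mem 2 hψ), rf.E_smul_self hψ,
            Real.sqrt_mul (by norm_num), Real.sqrt_sq zero_le_two]
      _ ≤ 2 * ∑ i ∈ P, √(rf.E (v i) (v i)) := by gcongr; exact rf.sqrt_E_sum_le P hv

lemma exists_mem_F_eq_one_eq_zero (V : Finset X) (a : X) :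
    ∃ w ∈ rf.F, w a = 1 ∧ ∀ b ∈ V, b ≠ a → w b = 0 := by
  classical
  choose! v hv using fun b (hb : b ∈ V.erase a) =>
    rf.exists_near_equilibrium_potential (Finset.ne_of_mem_erase hb).symm
  obtain ⟨φ, hφ, hφa, hφ0, -, -⟩ := rf.exists_cutoff_of_sum (V.erase a)
    (fun b hb => (hv b hb).1) (fun b hb => (hv b hb).2.1) (fun b hb => (hv b hb).2.2.2.1)
  refine ⟨φ, hφ, hφa, fun b hb hba => hφ0 b ⟨b, Finset.mem_erase.2 ⟨hba, hb⟩, ?_⟩⟩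
  rw [(hv b (Finset.mem_erase.2 ⟨hba, hb⟩)).2.2.1]
  norm_num

lemma exists_mem_F_eqOn (V : Finset X) (f : X → ℝ) : ∃ u ∈ rf.F, ∀ b ∈ V, u b = f b := by
  classical
  choose! w hw using fun a (_ : a ∈ V) => rf.exists_mem_F_eq_one_eq_zero V a
  refine ⟨∑ a ∈ V, f a • w a, rf.sum_mem V fun a ha => rf.smul_mem _ (hw a ha).1,
    fun b hb => ?_⟩
  rw [Finset.sum_apply, Finset.sum_eq_single b]
  · simp [(hw b hb).2.1]
  · intro a ha hab
    simp [(hw a ha).2.2 b hb hab.symm]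
  · exact fun h => absurd hb h

lemma traceQ_le_E {Y : Set X} {f : X → ℝ} (hu : u ∈ rf.F) (huf : ∀ z ∈ Y, u z = f z) :
    rf.traceQ Y f ≤ rf.E u u := by
  refine csInf_le ⟨0, ?_⟩ ⟨u, hu, huf, rfl⟩
  rintro e ⟨w, hw, -, rfl⟩
  exact rf.nonneg w hw

lemma le_traceQ {V : Finset X} {f : X → ℝ} {c : ℝ}
    (h : ∀ u ∈ rf.F, (∀ z ∈ V, u z = f z) → c ≤ rf.E u u) : c ≤ rf.traceQ V f := by
  obtain ⟨u, hu, huf⟩ := rf.exists_mem_F_eqOn V f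
  refine le_csInf ⟨_, u, hu, huf, rfl⟩ ?_
  rintro e ⟨w, hw, hwf, rfl⟩
  exact h w hw hwf

lemma inv_rmetric_le_traceQ {V : Finset X} {f : X → ℝ} {x y : X} (hx : x ∈ V) (hy : y ∈ V)
    (hxy : x ≠ y) (hfx : f x = 1) (hfy : f y = 0) : (rf.rmetric x y)⁻¹ ≤ rf.traceQ V f :=
  rf.le_traceQ fun _ hu huf =>
    rf.inv_rmetric_le_E hxy hu ((huf x hx).trans hfx) ((huf y hy).trans hfy)

lemma traceQ_unitTrunc_le (V : Finset X) (f : X → ℝ) :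
    rf.traceQ V (fun z => unitTrunc (f z)) ≤ rf.traceQ V f :=
  rf.le_traceQ fun _ hu huf =>
    (rf.traceQ_le_E (rf.unitTrunc_mem hu) fun z hz => by rw [huf z hz]).trans
      (rf.E_unitTrunc_le hu)

namespace IsResistanceWeights

variable {rf} {V : Finset X} {μ : X → X → ℝ}

lemma traceQ_eq (hμ : rf.IsResistanceWeights V μ) (f : X → ℝ) :
    rf.traceQ V f = weightedEnergy V μ f := by
  simp only [hμ.2.2 f, weightedEnergy, sq]

/-- The Markov property of the trace, tested on `𝟙_p - s 𝟙_q` (whose unit truncation is `𝟙_p`),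
forces `0 ≤ 2 s μ_{p,q} + O(s²)`. -/
lemma nonneg (hμ : rf.IsResistanceWeights V μ) {p q : X} (hp : p ∈ V) (hq : q ∈ V)
    (hpq : p ≠ q) : 0 ≤ μ p q := by
  classical
  set e : X → X → ℝ := fun a z => if z = a then 1 else 0
  have hcross : ∑ a ∈ V, ∑ b ∈ V, (e p a - e p b) * (e q a - e q b) * μ a b = -2 * μ p q := by
    have h : ∀ a b, (e p a - e p b) * (e q a - e q b) * μ a b =
        -(e p a * e q b * μ a b) - e q a * e p b * μ a b := by
      intro a b
      simp only [e]
      split_ifs <;> simp_all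
    simp [h, Finset.sum_sub_distrib, hp, hq, e, hμ.1 q p]
    ring
  have hkey : ∀ s : ℝ, 0 < s → 0 ≤ 2 * s * μ p q + s ^ 2 * weightedEnergy V μ (e q) := by
    intro s hs
    have htr : (fun z => unitTrunc ((e p - s • e q) z)) = e p := by
      funext z
      by_cases hzp : z = p
      · simp [e, hzp, hpq, unitTrunc_one]
      · by_cases hzq : z = q
        · subst hzq
          simp only [e, Pi.sub_apply, Pi.smul_apply, smul_eq_mul, if_neg hpq.symm, if_true]
          exact unitTrunc_of_nonpos (by linarith)
        · simp [e, hzp, hzq, unitTrunc_of_nonpos]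
    have h := rf.traceQ_unitTrunc_le V (e p - s • e q)
    rw [htr, hμ.traceQ_eq, hμ.traceQ_eq, weightedEnergy_sub_smul, hcross] at h
    linarith
  by_contra! hneg
  set Q := weightedEnergy V μ (e q)
  set s := -μ p q / (|Q| + 1)
  have hs : 0 < s := div_pos (neg_pos.2 hneg) (by positivity)
  have hsQ : s * (|Q| + 1) = -μ p q := div_mul_cancel₀ _ (by positivity)
  have hQ : s ^ 2 * Q ≤ s ^ 2 * |Q| := mul_le_mul_of_nonneg_left (le_abs_self Q) (sq_nonneg s)
  nlinarith [hkey s hs]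

lemma inv_rmetric_le_weightedEnergy_add (hμ : rf.IsResistanceWeights V μ) {x y : X}
    (hx : x ∈ V) (hy : y ∈ V) (hxy : x ≠ y) {B : Finset X} (hB : B ⊆ V) {φ : X → ℝ}
    (hφ : φ ∈ rf.F) (hφx : φ x = 1) (hφ0 : ∀ z, 0 ≤ φ z) (hφB : ∀ z ∈ V, z ∉ B → φ z = 0)
    {f : X → ℝ} (hfx : f x = 1) (hfy : f y = 0) :
    (rf.rmetric x y)⁻¹ ≤ weightedEnergy B μ f + rf.E φ φ := by
  set g := fun z => min (unitTrunc (f z)) (φ z)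
  have hgx : g x = 1 := by simp [g, hfx, hφx, unitTrunc_one]
  have hgy : g y = 0 := by simp [g, hfy, unitTrunc_of_nonpos, hφ0 y]
  calc (rf.rmetric x y)⁻¹ ≤ rf.traceQ V g := rf.inv_rmetric_le_traceQ hx hy hxy hgx hgy
    _ = weightedEnergy V μ g := hμ.traceQ_eq g
    _ ≤ weightedEnergy B μ f + weightedEnergy V μ φ :=
      weightedEnergy_min_unitTrunc_le hB (fun _ ha _ hb hab => hμ.nonneg ha hb hab) hφ0 hφB
    _ ≤ weightedEnergy B μ f + rf.E φ φ := by
      rw [← hμ.traceQ_eq]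
      exact add_le_add_right (rf.traceQ_le_E hφ fun _ _ => rfl) _

end IsResistanceWeights

end ResistanceForm

def IsDoublingWith (X : Type*) [PseudoMetricSpace X] (N : ℕ) : Prop :=
  ∀ (x : X) (r : ℝ), ∃ s : Finset X, s.card ≤ N ∧ ball x (2 * r) ⊆ ⋃ z ∈ s, ball z r

lemma DoublingOf.exists_isDoublingWith {X : Type*} [PseudoMetricSpace X]
    (h : DoublingOf fun x y : X => dist x y) : ∃ N, IsDoublingWith X N := by
  obtain ⟨N, hN⟩ := h
  refine ⟨N, fun x r => ?_⟩
  obtain ⟨s, hs, hcov⟩ := hN x r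
  refine ⟨s, hs, fun y hy => ?_⟩
  have := hcov (show dist x y < 2 * r by rwa [dist_comm, ← mem_ball])
  simpa [dist_comm y] using this

lemma exists_separated_net {X : Type*} [PseudoMetricSpace X] (s : Finset X) {δ : ℝ}
    (hδ : 0 < δ) : ∃ P ⊆ s, (∀ w ∈ s, ∃ p ∈ P, dist w p < δ) ∧
      (P : Set X).Pairwise fun p q => δ ≤ dist p q := by
  classical
  obtain ⟨P, hP, hmax⟩ := (s.powerset.filter fun P : Finset X =>
    (P : Set X).Pairwise fun p q => δ ≤ dist p q).exists_max_image Finset.card ⟨∅, by simp⟩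
  rw [Finset.mem_filter, Finset.mem_powerset] at hP
  refine ⟨P, hP.1, fun w hw => ?_, hP.2⟩
  by_contra! hfar
  have hwP : w ∉ P := fun h => (hfar w h).not_gt (by simpa using hδ)
  have hins : (↑(insert w P) : Set X).Pairwise fun p q => δ ≤ dist p q := by
    rw [Finset.coe_insert, Set.pairwise_insert]
    exact ⟨hP.2, fun p hp _ => ⟨hfar p hp, dist_comm w p ▸ hfar p hp⟩⟩
  have := hmax (insert w P) (Finset.mem_filter.2
    ⟨Finset.mem_powerset.2 (Finset.insert_subset hw hP.1), hins⟩)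
  rw [Finset.card_insert_of_notMem hwP] at this
  omega

namespace IsDoublingWith

variable {X : Type*} [PseudoMetricSpace X] {N : ℕ}

lemma exists_cover_pow (hN : IsDoublingWith X N) (j : ℕ) (x : X) (t : ℝ) :
    ∃ s : Finset X, s.card ≤ N ^ j ∧ ball x (2 ^ j * t) ⊆ ⋃ z ∈ s, ball z t := by
  classical
  induction j generalizing x with
  | zero => exact ⟨{x}, by simp, by simp⟩
  | succ j ih =>
    obtain ⟨s₀, hs₀, hcov₀⟩ := hN x (2 ^ j * t)
    choose g hg hcov using ih
    refine ⟨s₀.biUnion g, ?_, fun y hy => ?_⟩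
    · calc (s₀.biUnion g).card ≤ s₀.card * N ^ j :=
            Finset.card_biUnion_le_card_mul _ _ _ fun z _ => hg z
        _ ≤ N ^ (j + 1) := by rw [pow_succ']; exact Nat.mul_le_mul_right _ hs₀
    rw [pow_succ', mul_assoc] at hy
    obtain ⟨z, hz, hyz⟩ := mem_iUnion₂.1 (hcov₀ hy)
    obtain ⟨w, hw, hyw⟩ := mem_iUnion₂.1 (hcov z hyz)
    exact mem_iUnion₂.2 ⟨w, Finset.mem_biUnion.2 ⟨z, hz, hw⟩, hyw⟩

lemma card_le_pow (hN : IsDoublingWith X N) {P : Finset X} {x : X} {t : ℝ} (j : ℕ)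
    (hP : ∀ p ∈ P, dist p x < 2 ^ j * t) (hsep : (P : Set X).Pairwise fun p q => 2 * t ≤ dist p q) :
    P.card ≤ N ^ j := by
  obtain ⟨s, hs, hcov⟩ := hN.exists_cover_pow j x t
  have : ∀ p ∈ P, ∃ z ∈ s, dist p z < t := fun p hp => by
    simpa using hcov (mem_ball.2 (hP p hp))
  choose! z hzs hz using this
  refine le_trans (Finset.card_le_card_of_injOn z (fun p hp => hzs p hp) ?_) hs
  intro p hp q hq hpq
  by_contra hne
  have hzp := hz p hp
  rw [hpq] at hzp
  linarith [hsep hp hq hne, dist_triangle_right p q (z q), hz q hq]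

lemma exists_net (hN : IsDoublingWith X N) (s : Finset X) (x : X) {t : ℝ} (ht : 0 < t) (j : ℕ)
    (hs : ∀ w ∈ s, dist w x < 2 ^ j * t) :
    ∃ P ⊆ s, (∀ w ∈ s, ∃ p ∈ P, dist w p < 2 * t) ∧ P.card ≤ N ^ j := by
  obtain ⟨P, hPs, hcov, hsep⟩ := exists_separated_net s (by positivity : 0 < 2 * t)
  exact ⟨P, hPs, hcov, hN.card_le_pow j (fun p hp => hs p (hPs hp)) hsep⟩

end IsDoublingWith

/-- Nets of mesh `4ᵏ r / 8` in the dyadic annuli `4ᵏ r ≤ d(x, ·) < 4ᵏ⁺¹ r`: each has at most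
`N⁶` points by doubling, and the annuli contribute a geometric series. -/
lemma IsDoublingWith.exists_sparse_net {X : Type*} [PseudoMetricSpace X] {N : ℕ}
    (hN : IsDoublingWith X N) (x : X) {r : ℝ} (hr : 0 < r) (W : Finset X)
    (hW : ∀ w ∈ W, r ≤ dist x w) :
    ∃ P ⊆ W, (∀ w ∈ W, ∃ p ∈ P, 8 * dist w p ≤ dist x p) ∧
      ∑ p ∈ P, (√(dist x p))⁻¹ ≤ 2 * N ^ 6 / √r := by
  classical
  set A : ℕ → Finset X := fun k =>
    W.filter fun w => 4 ^ k * r ≤ dist x w ∧ dist x w < 4 ^ (k + 1) * r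
  have hA : ∀ w ∈ W, ∃ k, w ∈ A k := fun w hw => by
    obtain ⟨k, hk⟩ := exists_nat_pow_near ((one_le_div hr).2 (hW w hw)) (by norm_num : (1 : ℝ) < 4)
    exact ⟨k, Finset.mem_filter.2 ⟨hw, (le_div_iff₀ hr).1 hk.1, (div_lt_iff₀ hr).1 hk.2⟩⟩
  choose! κ hκ using hA
  have hAdisj : ∀ k l, k ≠ l → Disjoint (A k) (A l) := fun k l hkl => by
    refine Finset.disjoint_left.2 fun w hwk hwl => hkl ?_
    have hk := (Finset.mem_filter.1 hwk).2
    have hl := (Finset.mem_filter.1 hwl).2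
    have h1 : k < l + 1 := (pow_lt_pow_iff_right₀ (by norm_num : (1 : ℝ) < 4)).1 <|
      lt_of_mul_lt_mul_right (hk.1.trans_lt hl.2) hr.le
    have h2 : l < k + 1 := (pow_lt_pow_iff_right₀ (by norm_num : (1 : ℝ) < 4)).1 <|
      lt_of_mul_lt_mul_right (hl.1.trans_lt hk.2) hr.le
    omega
  have hnet : ∀ k, ∃ P ⊆ A k, (∀ w ∈ A k, ∃ p ∈ P, dist w p < 2 * (4 ^ k * r / 16)) ∧
      P.card ≤ N ^ 6 := fun k =>
    hN.exists_net (A k) x (by positivity) 6 fun w hw => by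
      rw [dist_comm, show (2 : ℝ) ^ 6 * (4 ^ k * r / 16) = 4 ^ (k + 1) * r by ring]
      exact (Finset.mem_filter.1 hw).2.2
  choose P hPA hPcov hPcard using hnet
  have hPx : ∀ k, ∀ p ∈ P k, 4 ^ k * r ≤ dist x p := fun k p hp =>
    (Finset.mem_filter.1 (hPA k hp)).2.1
  refine ⟨(W.image κ).biUnion P, Finset.biUnion_subset.2 fun k _ =>
    (hPA k).trans (Finset.filter_subset _ _), fun w hw => ?_, ?_⟩
  · obtain ⟨p, hp, hwp⟩ := hPcov (κ w) w (hκ w hw)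
    refine ⟨p, Finset.mem_biUnion.2 ⟨κ w, Finset.mem_image_of_mem κ hw, hp⟩, ?_⟩
    linarith [hPx (κ w) p hp]
  have hterm : ∀ k, ∀ p ∈ P k, (√(dist x p))⁻¹ ≤ (1 / 2) ^ k / √r := fun k p hp => by
    have hsqrt : √(4 ^ k * r) = 2 ^ k * √r := by
      have h4 : (4 : ℝ) ^ k = (2 ^ k) ^ 2 := by rw [← pow_mul, mul_comm, pow_mul]; norm_num
      rw [h4, Real.sqrt_mul (by positivity), Real.sqrt_sq (by positivity)]
    calc (√(dist x p))⁻¹ ≤ (√(4 ^ k * r))⁻¹ :=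
          inv_anti₀ (by positivity) (Real.sqrt_le_sqrt (hPx k p hp))
      _ = (1 / 2) ^ k / √r := by rw [hsqrt, one_div, inv_pow, div_eq_mul_inv, mul_inv]
  calc ∑ p ∈ (W.image κ).biUnion P, (√(dist x p))⁻¹
      = ∑ k ∈ W.image κ, ∑ p ∈ P k, (√(dist x p))⁻¹ :=
        Finset.sum_biUnion fun k _ l _ hkl =>
          (hAdisj k l hkl).mono (hPA k) (hPA l)
    _ ≤ ∑ k ∈ W.image κ, N ^ 6 * ((1 / 2) ^ k / √r) := by
        gcongr with k
        calc ∑ p ∈ P k, (√(dist x p))⁻¹ ≤ (P k).card * ((1 / 2) ^ k / √r) := by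
              simpa using Finset.sum_le_sum (hterm k)
          _ ≤ N ^ 6 * ((1 / 2) ^ k / √r) := by gcongr; exact_mod_cast hPcard k
    _ = N ^ 6 / √r * ∑ k ∈ W.image κ, (1 / 2 : ℝ) ^ k := by
        rw [Finset.mul_sum]; congr 1; ext k; ring
    _ ≤ N ^ 6 / √r * 2 := by
        gcongr
        calc ∑ k ∈ W.image κ, (1 / 2 : ℝ) ^ k ≤ ∑' k, (1 / 2 : ℝ) ^ k :=
              summable_geometric_two.sum_le_tsum _ fun _ _ => by positivity
          _ = 2 := tsum_geometric_two
    _ = 2 * N ^ 6 / √r := by ring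

namespace ResistanceForm

variable {X : Type*} [MetricSpace X] (rf : ResistanceForm X)

lemma exists_cutoff (hR : ∀ x y : X, dist x y = rf.rmetric x y) {N : ℕ}
    (hN : IsDoublingWith X N) (x : X) {r : ℝ} (hr : 0 < r) (W : Finset X)
    (hW : ∀ w ∈ W, r ≤ dist x w) :
    ∃ φ ∈ rf.F, φ x = 1 ∧ (∀ w ∈ W, φ w = 0) ∧ (∀ z, 0 ≤ φ z) ∧
      rf.E φ φ ≤ 32 * N ^ 12 / r := by
  obtain ⟨P, hPW, hPcov, hPsum⟩ := hN.exists_sparse_net x hr W hW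
  have hxp : ∀ p ∈ P, 0 < dist x p := fun p hp => hr.trans_le (hW p (hPW hp))
  choose! v hv using fun p hp => rf.exists_near_equilibrium_potential (dist_pos.1 (hxp p hp))
  simp only [← hR] at hv
  obtain ⟨φ, hφ, hφx, hφW, hφ0, hφE⟩ := rf.exists_cutoff_of_sum P (fun p hp => (hv p hp).1)
    (fun p hp => (hv p hp).2.1) (fun p hp => (hv p hp).2.2.2.1)
  refine ⟨φ, hφ, hφx, fun w hw => hφW w ?_, hφ0, ?_⟩
  · obtain ⟨p, hp, hwp⟩ := hPcov w hw
    obtain ⟨hvF, -, hvp, -, hvE⟩ := hv p hp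
    have h := rf.sq_sub_le_rmetric_mul_E hvF w p
    rw [← hR, hvp, sub_zero] at h
    have hq : v p w ^ 2 ≤ 1 / 4 := by
      calc v p w ^ 2 ≤ dist w p * (2 / dist x p) := h.trans (by gcongr)
        _ ≤ 1 / 4 := by rw [mul_div_assoc', div_le_iff₀ (hxp p hp)]; linarith
    exact ⟨p, hp, by nlinarith⟩
  · have hsqrt : √(rf.E φ φ) ≤ 4 * √2 * N ^ 6 / √r := by
      calc √(rf.E φ φ) ≤ 2 * ∑ p ∈ P, √(rf.E (v p) (v p)) := hφE
        _ ≤ 2 * ∑ p ∈ P, √2 * (√(dist x p))⁻¹ := by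
            gcongr with p hp
            rw [← div_eq_mul_inv, ← Real.sqrt_div' _ dist_nonneg]
            exact Real.sqrt_le_sqrt (hv p hp).2.2.2.2
        _ ≤ 4 * √2 * N ^ 6 / √r := by
            rw [← Finset.mul_sum]
            calc 2 * (√2 * ∑ p ∈ P, (√(dist x p))⁻¹) ≤ 2 * (√2 * (2 * N ^ 6 / √r)) := by gcongr
              _ = 4 * √2 * N ^ 6 / √r := by ring
    calc rf.E φ φ = √(rf.E φ φ) ^ 2 := (Real.sq_sqrt (rf.nonneg φ hφ)).symm
      _ ≤ (4 * √2 * N ^ 6 / √r) ^ 2 := by gcongr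
      _ = 32 * N ^ 12 / r := by
        rw [div_pow, mul_pow, mul_pow, Real.sq_sqrt zero_le_two, Real.sq_sqrt hr.le]; ring

end ResistanceForm

open Classical in
theorem localized_resistance_le_two_rmetric_general {X : Type*} [MetricSpace X]
    (rf : ResistanceForm X) (hR : ∀ x y : X, dist x y = rf.rmetric x y)
    (hdb : DoublingOf fun x y : X => dist x y) :
    ∃ α : ℝ, 1 < α ∧ ∀ V : Finset X, V.Nonempty → ∀ μ : X → X → ℝ,
      rf.IsResistanceWeights V μ → ∀ x ∈ V, ∀ y ∈ V, x ≠ y →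
      (sInf {e : ℝ | ∃ f : X → ℝ, f x = 1 ∧ f y = 0 ∧
          e = (1 / 2) * ∑ p ∈ V.filter (fun p => p ∈ Metric.ball x (α * dist x y)),
                ∑ q ∈ V.filter (fun q => q ∈ Metric.ball x (α * dist x y)),
                  (f p - f q) ^ 2 * μ p q})⁻¹ ≤ 2 * dist x y := by
  obtain ⟨N, hN⟩ := hdb.exists_isDoublingWith
  refine ⟨64 * N ^ 12 + 2, by linarith [pow_nonneg (N.cast_nonneg : (0 : ℝ) ≤ N) 12],
    fun V _ μ hμ x hx y hy hxy => ?_⟩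
  set α : ℝ := 64 * N ^ 12 + 2
  set d := dist x y
  have hd : 0 < d := dist_pos.2 hxy
  set B := V.filter fun p => p ∈ ball x (α * d)
  obtain ⟨φ, hφ, hφx, hφW, hφ0, hφE⟩ := rf.exists_cutoff hR hN x (r := α * d) (by positivity)
    (V \ B) fun w hw => by
      obtain ⟨hwV, hwB⟩ := Finset.mem_sdiff.1 hw
      simpa [B, hwV, dist_comm] using hwB
  have hφE' : rf.E φ φ ≤ (2 * d)⁻¹ := by
    refine hφE.trans ?_
    rw [div_le_iff₀ (by positivity)]
    field_simp
    nlinarith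
  have hlow : ∀ f : X → ℝ, f x = 1 → f y = 0 → (2 * d)⁻¹ ≤ weightedEnergy B μ f := by
    intro f hfx hfy
    have := hμ.inv_rmetric_le_weightedEnergy_add hx hy hxy (Finset.filter_subset _ _) hφ hφx hφ0
      (fun z hz hzB => hφW z (Finset.mem_sdiff.2 ⟨hz, hzB⟩)) hfx hfy
    rw [← hR] at this
    linarith [show d⁻¹ = (2 * d)⁻¹ + (2 * d)⁻¹ by field_simp; ring]
  have hinf : (2 * d)⁻¹ ≤
      sInf {e : ℝ | ∃ f : X → ℝ, f x = 1 ∧ f y = 0 ∧ e = weightedEnergy B μ f} := by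
    refine le_csInf ⟨_, fun z => if z = x then 1 else 0, if_pos rfl, if_neg hxy.symm, rfl⟩ ?_
    rintro e ⟨f, hfx, hfy, rfl⟩
    exact hlow f hfx hfy
  exact (inv_le_comm₀ ((inv_pos.2 (by positivity)).trans_le hinf) (by positivity)).2 hinf

open Classical in
/-- Under the standing assumptions, there is `α > 1` such that for every
nonempty finite `V ⊆ X`, the resistance weights `μ` of the trace `(E|_V, ℓ(V))`, and all
`x, y ∈ V` with `x ≠ y`, one has `R_{V,B}(x,y) ≤ 2 R(x,y)` where `B = B_R(x, α R(x,y))`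
and `R_{V,B}(x,y)⁻¹ = min {(1/2) ∑_{p,q ∈ B∩V} (f p - f q)² μ_{p,q} : f ∈ ℓ(V), f x = 1,
f y = 0}`. -/
theorem localized_resistance_le_two_rmetric {X : Type*} [MetricSpace X] [CompleteSpace X]
    (rf : ResistanceForm X) (hR : ∀ x y : X, dist x y = rf.rmetric x y)
    (hdb : DoublingOf fun x y : X => dist x y)
    (hup : UniformlyPerfectOf fun x y : X => dist x y) :
    ∃ α : ℝ, 1 < α ∧ ∀ V : Finset X, V.Nonempty → ∀ μ : X → X → ℝ,
      rf.IsResistanceWeights V μ → ∀ x ∈ V, ∀ y ∈ V, x ≠ y →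
      (sInf {e : ℝ | ∃ f : X → ℝ, f x = 1 ∧ f y = 0 ∧
          e = (1 / 2) * ∑ p ∈ V.filter (fun p => p ∈ Metric.ball x (α * dist x y)),
                ∑ q ∈ V.filter (fun q => q ∈ Metric.ball x (α * dist x y)),
                  (f p - f q) ^ 2 * μ p q})⁻¹ ≤ 2 * dist x y :=
  localized_resistance_le_two_rmetric_general rf hR hdb
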